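/- Let w be a strictly positive analytic weight on T₁, ρ = inf{0<r<1 : 1/w is holomorphic in r<|z|<1/r}, and fix r with ρ<r<1. For each N = 0, 1, 2, … there exists a constant C > 0 depending only on r and N such that for all sufficiently large n: |S₁₁(n;z) − Σ_{k=0}^{N} f_n^{(2k)}(z)| ≤ C r^{(2N+2)n}/||z|−1/r| for all |z| ≠ 1/r, and |S₁₂(n;z) − Σ_{k=0}^{N} f_n^{(2k+1)}(z)| ≤ C r^{(2N+3)n}/||z|−r| for all |z| ≠ r. -/

import Mathlib

open MeasureTheory

/-- The Szegő function of a (complex-valued, positive on the unit circle) weight `w`. -/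
noncomputable def szegoD (w : ℂ → ℂ) (z : ℂ) : ℂ :=
  Complex.exp ((4 * (Real.pi : ℂ))⁻¹ * ∫ θ in (0:ℝ)..(2 * Real.pi),
    (Real.log ((w (Complex.exp (θ * Complex.I))).re) : ℂ) *
      ((Complex.exp (θ * Complex.I) + z) / (Complex.exp (θ * Complex.I) - z)))

/-- The Cauchy-type operator `𝓜_n^i` (integration over `|t| = r`). -/
noncomputable def Mi (τ : ℂ) (S : ℂ → ℂ) (r : ℝ) (n : ℕ) (f : ℂ → ℂ) (z : ℂ) : ℂ :=
  -(2 * Real.pi * Complex.I * τ ^ 2)⁻¹ * ∮ t in C(0, r), f t * S t * t ^ n / (t - z)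

/-- The Cauchy-type operator `𝓜_n^e` (integration over `|t| = 1/r`). -/
noncomputable def Me (τ : ℂ) (S : ℂ → ℂ) (r : ℝ) (n : ℕ) (f : ℂ → ℂ) (z : ℂ) : ℂ :=
  τ ^ 2 * (2 * Real.pi * Complex.I)⁻¹ * ∮ t in C(0, 1 / r), f t / (S t * t ^ n * (t - z))

/-- The iterates `f_n^{(j)}`. -/
noncomputable def fIter (τ : ℂ) (S : ℂ → ℂ) (r : ℝ) (n : ℕ) : ℕ → ℂ → ℂ
  | 0 => fun _ => 1
  | j + 1 =>
    if Even j then Mi τ S r n (fIter τ S r n j) else Me τ S r n (fIter τ S r n j)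

/-!
Both operators are Cauchy integrals over circles, so they obey Cauchy-type estimates: if `|S| ≤ M`
on `|t| = r` and `|S| ≥ m > 0` on `|t| = 1/r`, one pass `𝓜ₙⁱ` followed by `𝓜ₙᵉ` multiplies the
supremum of `f_n^{(2k)}` on `|t| = r` by at most `q_n = M r^{2n} / (m (1/r - r)²)`, the factor
`tⁿ` contributing `rⁿ` on each circle. Hence `f_n^{(2k)} = O(q_nᵏ)`, `f_n^{(2k+1)} = O(rⁿ q_nᵏ)`,
and once `q_n ≤ 1/2` both series converge geometrically, with tails after `N + 1` terms of order
`q_n^{N+1}`, a constant times `r^{(2N+2)n}`. The bounds `M` and `m` come from compactness of the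
circles and from `S = D_i D_e ≠ 0` on the annulus.
-/

open Filter Topology

theorem norm_tsum_sub_sum_range_le_of_geometric {E : Type*} [NormedAddCommGroup E]
    [CompleteSpace E] {g : ℕ → E} {C q : ℝ} (hq0 : 0 ≤ q) (hq1 : q < 1) (N : ℕ)
    (hg : ∀ k, N ≤ k → ‖g k‖ ≤ C * q ^ k) :
    ‖∑' k, g k - ∑ k ∈ Finset.range N, g k‖ ≤ C * q ^ N / (1 - q) := by
  have hgeom : HasSum (fun k => C * q ^ N * q ^ k) (C * q ^ N / (1 - q)) :=
    (hasSum_geometric_of_lt_one hq0 hq1).mul_left _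
  have htail : ∀ k, ‖g (k + N)‖ ≤ C * q ^ N * q ^ k := fun k => by
    simpa only [pow_add, mul_comm, mul_left_comm, mul_assoc] using hg (k + N) (by omega)
  have hsum : Summable g := (summable_nat_add_iff N).mp (hgeom.summable.of_norm_bounded htail)
  rw [← hsum.sum_add_tsum_nat_add N, add_sub_cancel_left]
  exact tsum_of_norm_bounded hgeom htail

theorem div_one_sub_le_two_mul {a q : ℝ} (ha : 0 ≤ a) (hq : q ≤ 1 / 2) :
    a / (1 - q) ≤ 2 * a := by
  rw [div_le_iff₀ (by linarith)]
  nlinarith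

theorem norm_circleIntegral_div_sub_le {R B : ℝ} (hR : 0 ≤ R) (hB : 0 ≤ B) {g : ℂ → ℂ}
    (hg : ∀ t, ‖t‖ = R → ‖g t‖ ≤ B) {z : ℂ} (hz : ‖z‖ ≠ R) :
    ‖∮ t in C(0, R), g t / (t - z)‖ ≤ 2 * Real.pi * R * (B / |‖z‖ - R|) := by
  refine circleIntegral.norm_integral_le_of_norm_le_const hR fun t ht => ?_
  have ht : ‖t‖ = R := by simpa using ht
  rw [norm_div]
  refine div_le_div₀ hB (hg t ht) (abs_pos.mpr (sub_ne_zero.mpr hz)) ?_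
  simpa [ht, abs_sub_comm] using abs_norm_sub_norm_le t z

theorem IsCompact.exists_pos_forall_le_norm {X E : Type*} [TopologicalSpace X]
    [NormedAddCommGroup E] {s : Set X} {f : X → E} (hs : IsCompact s) (hf : ContinuousOn f s)
    (h0 : ∀ x ∈ s, f x ≠ 0) : ∃ m, 0 < m ∧ ∀ x ∈ s, m ≤ ‖f x‖ := by
  rcases s.eq_empty_or_nonempty with rfl | hne
  · exact ⟨1, one_pos, by simp⟩
  obtain ⟨x₀, hx₀, hmin⟩ := hs.exists_isMinOn hne (continuous_norm.comp_continuousOn hf)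
  exact ⟨‖f x₀‖, norm_pos_iff.mpr (h0 x₀ hx₀), fun x hx => hmin hx⟩

noncomputable def iterRatio (r M m : ℝ) (n : ℕ) : ℝ :=
  M / (m * (1 / r - r) ^ 2) * r ^ (2 * n)

section Iterates

variable {τ : ℝ} {S : ℂ → ℂ} {r M m : ℝ} {n : ℕ}

theorem fIter_two_mul_add_one (k : ℕ) :
    fIter τ S r n (2 * k + 1) = Mi τ S r n (fIter τ S r n (2 * k)) := by
  simp [fIter]

theorem fIter_two_mul_add_two (k : ℕ) :
    fIter τ S r n (2 * k + 2) = Me τ S r n (fIter τ S r n (2 * k + 1)) := by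
  simp [fIter]

theorem norm_Mi_le (hτ : 0 < τ) (hr : 0 < r) {f : ℂ → ℂ} {F : ℝ} (hF : 0 ≤ F)
    (hf : ∀ t, ‖t‖ = r → ‖f t‖ ≤ F) (hS : ∀ t, ‖t‖ = r → ‖S t‖ ≤ M) {z : ℂ} (hz : ‖z‖ ≠ r) :
    ‖Mi τ S r n f z‖ ≤ r * M / τ ^ 2 * r ^ n * F / |‖z‖ - r| := by
  have hM : 0 ≤ M := (norm_nonneg _).trans (hS r (by simp [hr.le]))
  have hint : ∀ t, ‖t‖ = r → ‖f t * S t * t ^ n‖ ≤ F * M * r ^ n := fun t ht => by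
    rw [norm_mul, norm_mul, norm_pow, ht]
    gcongr
    exacts [hf t ht, hS t ht]
  have hconst : ‖-(2 * Real.pi * Complex.I * (τ : ℂ) ^ 2)⁻¹‖ = (2 * Real.pi * τ ^ 2)⁻¹ := by
    simp [abs_of_pos Real.pi_pos]
  rw [Mi, norm_mul, hconst]
  calc (2 * Real.pi * τ ^ 2)⁻¹ * ‖∮ t in C(0, r), f t * S t * t ^ n / (t - z)‖
      ≤ (2 * Real.pi * τ ^ 2)⁻¹ * (2 * Real.pi * r * (F * M * r ^ n / |‖z‖ - r|)) := by
        gcongr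
        exact norm_circleIntegral_div_sub_le hr.le (by positivity) hint hz
    _ = r * M / τ ^ 2 * r ^ n * F / |‖z‖ - r| := by
        field_simp

theorem norm_Me_le (hτ : 0 < τ) (hr : 0 < r) (hm : 0 < m) {f : ℂ → ℂ} {F : ℝ} (hF : 0 ≤ F)
    (hf : ∀ t, ‖t‖ = 1 / r → ‖f t‖ ≤ F) (hS : ∀ t, ‖t‖ = 1 / r → m ≤ ‖S t‖) {z : ℂ}
    (hz : ‖z‖ ≠ 1 / r) :
    ‖Me τ S r n f z‖ ≤ τ ^ 2 / (r * m) * r ^ n * F / |‖z‖ - 1 / r| := by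
  have hint : ∀ t, ‖t‖ = 1 / r → ‖f t / (S t * t ^ n)‖ ≤ F / (m * (1 / r) ^ n) := fun t ht => by
    rw [norm_div, norm_mul, norm_pow, ht]
    gcongr
    exacts [hf t ht, hS t ht]
  have hconst : ‖(τ : ℂ) ^ 2 * (2 * Real.pi * Complex.I)⁻¹‖ = τ ^ 2 * (2 * Real.pi)⁻¹ := by
    simp [abs_of_pos Real.pi_pos]
  have hsplit : (fun t => f t / (S t * t ^ n * (t - z))) =
      fun t => f t / (S t * t ^ n) / (t - z) := by
    funext t
    rw [div_div]
  rw [Me, hsplit, norm_mul, hconst]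
  calc τ ^ 2 * (2 * Real.pi)⁻¹ * ‖∮ t in C(0, 1 / r), f t / (S t * t ^ n) / (t - z)‖
      ≤ τ ^ 2 * (2 * Real.pi)⁻¹ *
          (2 * Real.pi * (1 / r) * (F / (m * (1 / r) ^ n) / |‖z‖ - 1 / r|)) := by
        gcongr
        exact norm_circleIntegral_div_sub_le (by positivity) (by positivity) hint hz
    _ = τ ^ 2 / (r * m) * r ^ n * F / |‖z‖ - 1 / r| := by
        rw [one_div_pow]
        field_simp

theorem norm_fIter_two_mul_add_two_le (hτ : 0 < τ) (hr0 : 0 < r) (hr1 : r < 1) (hm : 0 < m)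
    (hSr : ∀ t, ‖t‖ = r → ‖S t‖ ≤ M) (hSR : ∀ t, ‖t‖ = 1 / r → m ≤ ‖S t‖) {k : ℕ} {A : ℝ}
    (hA : 0 ≤ A) (hk : ∀ t, ‖t‖ = r → ‖fIter τ S r n (2 * k) t‖ ≤ A) {z : ℂ}
    (hz : ‖z‖ ≠ 1 / r) :
    ‖fIter τ S r n (2 * k + 2) z‖ ≤ (1 / r - r) * iterRatio r M m n * A / |‖z‖ - 1 / r| := by
  have hd : 0 < 1 / r - r := sub_pos.mpr (hr1.trans (one_lt_one_div hr0 hr1))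
  have hM : 0 ≤ M := (norm_nonneg _).trans (hSr r (by simp [hr0.le]))
  have hodd : ∀ t, ‖t‖ = 1 / r →
      ‖fIter τ S r n (2 * k + 1) t‖ ≤ r * M / τ ^ 2 * r ^ n * A / (1 / r - r) := fun t ht => by
    rw [fIter_two_mul_add_one]
    refine (norm_Mi_le hτ hr0 hA hk hSr (by rw [ht]; linarith)).trans_eq ?_
    rw [ht, abs_of_pos hd]
  rw [fIter_two_mul_add_two]
  refine (norm_Me_le hτ hr0 hm (by positivity) hodd hSR hz).trans_eq ?_
  rw [iterRatio, pow_mul']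
  field_simp

theorem norm_fIter_two_mul_le (hτ : 0 < τ) (hr0 : 0 < r) (hr1 : r < 1) (hm : 0 < m)
    (hSr : ∀ t, ‖t‖ = r → ‖S t‖ ≤ M) (hSR : ∀ t, ‖t‖ = 1 / r → m ≤ ‖S t‖) (k : ℕ) {t : ℂ}
    (ht : ‖t‖ = r) : ‖fIter τ S r n (2 * k) t‖ ≤ iterRatio r M m n ^ k := by
  have hd : 0 < 1 / r - r := sub_pos.mpr (hr1.trans (one_lt_one_div hr0 hr1))
  have hM : 0 ≤ M := (norm_nonneg _).trans (hSr r (by simp [hr0.le]))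
  induction k generalizing t with
  | zero => simp [fIter]
  | succ k ih =>
    have hq : 0 ≤ iterRatio r M m n := by unfold iterRatio; positivity
    refine (norm_fIter_two_mul_add_two_le hτ hr0 hr1 hm hSr hSR (pow_nonneg hq k)
      (fun t ht => ih ht) (by rw [ht]; linarith)).trans_eq ?_
    rw [ht, abs_sub_comm, abs_of_pos hd, mul_assoc, mul_div_cancel_left₀ _ hd.ne', pow_succ']

theorem norm_tsum_fIter_even_sub_le (hτ : 0 < τ) (hr0 : 0 < r) (hr1 : r < 1) (hm : 0 < m)
    (hSr : ∀ t, ‖t‖ = r → ‖S t‖ ≤ M) (hSR : ∀ t, ‖t‖ = 1 / r → m ≤ ‖S t‖)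
    (hq : iterRatio r M m n ≤ 1 / 2) (N : ℕ) {z : ℂ} (hz : ‖z‖ ≠ 1 / r) :
    ‖∑' k, fIter τ S r n (2 * k) z - ∑ k ∈ Finset.range (N + 1), fIter τ S r n (2 * k) z‖ ≤
      2 * (1 / r - r) * iterRatio r M m n ^ (N + 1) / |‖z‖ - 1 / r| := by
  have hd : 0 < 1 / r - r := sub_pos.mpr (hr1.trans (one_lt_one_div hr0 hr1))
  have hM : 0 ≤ M := (norm_nonneg _).trans (hSr r (by simp [hr0.le]))
  have hq0 : 0 ≤ iterRatio r M m n := by unfold iterRatio; positivity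
  have hbound : ∀ k, N + 1 ≤ k → ‖fIter τ S r n (2 * k) z‖ ≤
      (1 / r - r) / |‖z‖ - 1 / r| * iterRatio r M m n ^ k := by
    rintro (_ | k) hk
    · omega
    refine (norm_fIter_two_mul_add_two_le hτ hr0 hr1 hm hSr hSR (pow_nonneg hq0 k)
      (fun t ht => norm_fIter_two_mul_le hτ hr0 hr1 hm hSr hSR k ht) hz).trans_eq ?_
    ring
  calc _ ≤ (1 / r - r) / |‖z‖ - 1 / r| * iterRatio r M m n ^ (N + 1) / (1 - iterRatio r M m n) :=
        norm_tsum_sub_sum_range_le_of_geometric hq0 (by linarith) (N + 1) hbound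
    _ ≤ 2 * ((1 / r - r) / |‖z‖ - 1 / r| * iterRatio r M m n ^ (N + 1)) :=
        div_one_sub_le_two_mul (by positivity) hq
    _ = _ := by ring

theorem norm_tsum_fIter_odd_sub_le (hτ : 0 < τ) (hr0 : 0 < r) (hr1 : r < 1) (hm : 0 < m)
    (hSr : ∀ t, ‖t‖ = r → ‖S t‖ ≤ M) (hSR : ∀ t, ‖t‖ = 1 / r → m ≤ ‖S t‖)
    (hq : iterRatio r M m n ≤ 1 / 2) (N : ℕ) {z : ℂ} (hz : ‖z‖ ≠ r) :
    ‖∑' k, fIter τ S r n (2 * k + 1) z -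
        ∑ k ∈ Finset.range (N + 1), fIter τ S r n (2 * k + 1) z‖ ≤
      2 * (r * M / τ ^ 2) * r ^ n * iterRatio r M m n ^ (N + 1) / |‖z‖ - r| := by
  have hM : 0 ≤ M := (norm_nonneg _).trans (hSr r (by simp [hr0.le]))
  have hq0 : 0 ≤ iterRatio r M m n := by unfold iterRatio; positivity
  have hbound : ∀ k, N + 1 ≤ k → ‖fIter τ S r n (2 * k + 1) z‖ ≤
      r * M / τ ^ 2 * r ^ n / |‖z‖ - r| * iterRatio r M m n ^ k := fun k _ => by
    rw [fIter_two_mul_add_one]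
    refine (norm_Mi_le hτ hr0 (pow_nonneg hq0 k)
      (fun t ht => norm_fIter_two_mul_le hτ hr0 hr1 hm hSr hSR k ht) hSr hz).trans_eq ?_
    ring
  calc _ ≤ r * M / τ ^ 2 * r ^ n / |‖z‖ - r| * iterRatio r M m n ^ (N + 1) /
          (1 - iterRatio r M m n) :=
        norm_tsum_sub_sum_range_le_of_geometric hq0 (by linarith) (N + 1) hbound
    _ ≤ 2 * (r * M / τ ^ 2 * r ^ n / |‖z‖ - r| * iterRatio r M m n ^ (N + 1)) :=
        div_one_sub_le_two_mul (by positivity) hq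
    _ = _ := by ring

theorem eventually_iterRatio_le (hr0 : 0 < r) (hr1 : r < 1) (M m : ℝ) :
    ∀ᶠ n in atTop, iterRatio r M m n ≤ 1 / 2 := by
  have hlim : Tendsto (iterRatio r M m) atTop (𝓝 0) := by
    have := (tendsto_pow_atTop_nhds_zero_of_lt_one (sq_nonneg r)
      (pow_lt_one₀ hr0.le hr1 two_ne_zero)).const_mul (M / (m * (1 / r - r) ^ 2))
    rw [mul_zero] at this
    convert this using 2 with n
    rw [iterRatio, pow_mul]
  exact hlim.eventually (eventually_le_nhds (by norm_num))

theorem fIter_tail_bounds (hτ : 0 < τ) (hr0 : 0 < r) (hr1 : r < 1) (hM : 0 < M) (hm : 0 < m)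
    (hSr : ∀ t, ‖t‖ = r → ‖S t‖ ≤ M) (hSR : ∀ t, ‖t‖ = 1 / r → m ≤ ‖S t‖) (N : ℕ) :
    ∃ C : ℝ, 0 < C ∧ ∃ n₀ : ℕ, ∀ n : ℕ, n₀ ≤ n →
      (∀ z : ℂ, ‖z‖ ≠ 1 / r →
        ‖(∑' k : ℕ, fIter (τ : ℂ) S r n (2 * k) z) -
            ∑ k ∈ Finset.range (N + 1), fIter (τ : ℂ) S r n (2 * k) z‖ ≤
          C * r ^ ((2 * N + 2) * n) / |‖z‖ - 1 / r|) ∧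
      (∀ z : ℂ, ‖z‖ ≠ r →
        ‖(∑' k : ℕ, fIter (τ : ℂ) S r n (2 * k + 1) z) -
            ∑ k ∈ Finset.range (N + 1), fIter (τ : ℂ) S r n (2 * k + 1) z‖ ≤
          C * r ^ ((2 * N + 3) * n) / |‖z‖ - r|) := by
  have hd : 0 < 1 / r - r := sub_pos.mpr (hr1.trans (one_lt_one_div hr0 hr1))
  set K := M / (m * (1 / r - r) ^ 2)
  have hpow : ∀ n, iterRatio r M m n ^ (N + 1) = K ^ (N + 1) * r ^ ((2 * N + 2) * n) := fun n => by
    rw [iterRatio, mul_pow, ← pow_mul]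
    ring
  obtain ⟨n₀, hn₀⟩ := eventually_atTop.mp (eventually_iterRatio_le hr0 hr1 M m)
  refine ⟨2 * (1 / r - r + r * M / τ ^ 2) * K ^ (N + 1), by positivity, n₀, fun n hn => ⟨?_, ?_⟩⟩
  · intro z hz
    refine (norm_tsum_fIter_even_sub_le hτ hr0 hr1 hm hSr hSR (hn₀ n hn) N hz).trans ?_
    calc _ = 2 * (1 / r - r) * K ^ (N + 1) * r ^ ((2 * N + 2) * n) / |‖z‖ - 1 / r| := by
          rw [hpow]; ring
      _ ≤ _ := by gcongr; exact le_add_of_nonneg_right (by positivity)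
  · intro z hz
    refine (norm_tsum_fIter_odd_sub_le hτ hr0 hr1 hm hSr hSR (hn₀ n hn) N hz).trans ?_
    calc _ = 2 * (r * M / τ ^ 2) * K ^ (N + 1) * r ^ ((2 * N + 3) * n) / |‖z‖ - r| := by
          rw [hpow]; ring
      _ ≤ _ := by gcongr; exact le_add_of_nonneg_left hd.le

end Iterates

theorem stmt_9_general (ρ : ℝ) (hρ0 : 0 < ρ) (w : ℂ → ℂ)
    (hw_ne : ∀ z : ℂ, ρ < ‖z‖ → ‖z‖ < 1 / ρ → w z ≠ 0)
    (r : ℝ) (hr1 : ρ < r) (hr2 : r < 1)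
    (Di De : ℂ → ℂ)
    (hDi_an : AnalyticOn ℂ Di {z : ℂ | ‖z‖ < 1 / ρ})
    (hDe_an : AnalyticOn ℂ De {z : ℂ | ρ < ‖z‖})
    (hfact : ∀ z : ℂ, ρ < ‖z‖ → ‖z‖ < 1 / ρ → w z = Di z / De z)
    (τ : ℝ)
    (hτ : τ = Real.exp (-(4 * Real.pi)⁻¹ *
      ∫ θ in (0:ℝ)..(2 * Real.pi), Real.log ((w (Complex.exp (θ * Complex.I))).re)))
    (S : ℂ → ℂ)
    (hS : ∀ z : ℂ, ρ < ‖z‖ → ‖z‖ < 1 / ρ → S z = Di z * De z) :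
    ∀ N : ℕ, ∃ C : ℝ, 0 < C ∧ ∃ n₀ : ℕ, ∀ n : ℕ, n₀ ≤ n →
      (∀ z : ℂ, ‖z‖ ≠ 1 / r →
        ‖(∑' k : ℕ, fIter (τ : ℂ) S r n (2 * k) z) -
            ∑ k ∈ Finset.range (N + 1), fIter (τ : ℂ) S r n (2 * k) z‖ ≤
          C * r ^ ((2 * N + 2) * n) / |‖z‖ - 1 / r|) ∧
      (∀ z : ℂ, ‖z‖ ≠ r →
        ‖(∑' k : ℕ, fIter (τ : ℂ) S r n (2 * k + 1) z) -
            ∑ k ∈ Finset.range (N + 1), fIter (τ : ℂ) S r n (2 * k + 1) z‖ ≤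
          C * r ^ ((2 * N + 3) * n) / |‖z‖ - r|) := by
  have hr0 : 0 < r := hρ0.trans hr1
  set A := {z : ℂ | ρ < ‖z‖ ∧ ‖z‖ < 1 / ρ}
  have hSA : ContinuousOn S A :=
    ((hDi_an.continuousOn.mono fun z hz => hz.2).mul
      (hDe_an.continuousOn.mono fun z hz => hz.1)).congr fun z hz => hS z hz.1 hz.2
  have hS0 : ∀ z ∈ A, S z ≠ 0 := fun z hz => by
    have hwz := hw_ne z hz.1 hz.2
    rw [hfact z hz.1 hz.2, div_ne_zero_iff] at hwz
    rw [hS z hz.1 hz.2]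
    exact mul_ne_zero hwz.1 hwz.2
  have h1ρ : 1 < 1 / ρ := one_lt_one_div hρ0 (hr1.trans hr2)
  have hrA : Metric.sphere 0 r ⊆ A := fun t ht => by
    rw [mem_sphere_zero_iff_norm] at ht
    exact ⟨ht ▸ hr1, ht ▸ hr2.trans h1ρ⟩
  have hRA : Metric.sphere 0 (1 / r) ⊆ A := fun t ht => by
    rw [mem_sphere_zero_iff_norm] at ht
    exact ⟨ht ▸ (hr1.trans hr2).trans (one_lt_one_div hr0 hr2),
      ht ▸ one_div_lt_one_div_of_lt hρ0 hr1⟩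
  obtain ⟨M, hM⟩ := (isCompact_sphere (0 : ℂ) r).exists_bound_of_continuousOn (hSA.mono hrA)
  obtain ⟨m, hm, hmS⟩ := (isCompact_sphere (0 : ℂ) (1 / r)).exists_pos_forall_le_norm
    (hSA.mono hRA) fun t ht => hS0 t (hRA ht)
  exact fIter_tail_bounds (hτ ▸ Real.exp_pos _) hr0 hr2 (lt_max_of_lt_right one_pos) hm
    (fun t ht => (hM t (mem_sphere_zero_iff_norm.mpr ht)).trans (le_max_left M 1))
    (fun t ht => hmS t (mem_sphere_zero_iff_norm.mpr ht))

/-- truncation error bounds for the series `S₁₁(n;·)` and `S₁₂(n;·)`: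
for each `N` there is a constant `C` depending only on `r` and `N` with
`|S₁₁(n;z) − Σ_{k=0}^N f_n^{(2k)}(z)| ≤ C r^{(2N+2)n}/||z|−1/r|` and
`|S₁₂(n;z) − Σ_{k=0}^N f_n^{(2k+1)}(z)| ≤ C r^{(2N+3)n}/||z|−r|` for large `n`. -/
theorem stmt_9 (ρ : ℝ) (hρ0 : 0 < ρ) (hρ1 : ρ < 1) (w : ℂ → ℂ)
    (hw_an : AnalyticOn ℂ w {z : ℂ | ρ < ‖z‖ ∧ ‖z‖ < 1 / ρ})
    (hw_ne : ∀ z : ℂ, ρ < ‖z‖ → ‖z‖ < 1 / ρ → w z ≠ 0)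
    (hw_pos : ∀ z : ℂ, ‖z‖ = 1 → (w z).im = 0 ∧ 0 < (w z).re)
    (hρdef : ρ = sInf {s : ℝ | 0 < s ∧ s < 1 ∧
      AnalyticOn ℂ (fun z => (w z)⁻¹) {z : ℂ | s < ‖z‖ ∧ ‖z‖ < 1 / s}})
    (r : ℝ) (hr1 : ρ < r) (hr2 : r < 1)
    (Di De : ℂ → ℂ)
    (hDi_an : AnalyticOn ℂ Di {z : ℂ | ‖z‖ < 1 / ρ})
    (hDi_f : ∀ z : ℂ, ‖z‖ < 1 → Di z = szegoD w z)
    (hDe_an : AnalyticOn ℂ De {z : ℂ | ρ < ‖z‖})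
    (hDe_f : ∀ z : ℂ, 1 < ‖z‖ → De z = szegoD w z)
    (hfact : ∀ z : ℂ, ρ < ‖z‖ → ‖z‖ < 1 / ρ → w z = Di z / De z)
    (τ : ℝ)
    (hτ : τ = Real.exp (-(4 * Real.pi)⁻¹ *
      ∫ θ in (0:ℝ)..(2 * Real.pi), Real.log ((w (Complex.exp (θ * Complex.I))).re)))
    (S : ℂ → ℂ)
    (hS : ∀ z : ℂ, ρ < ‖z‖ → ‖z‖ < 1 / ρ → S z = Di z * De z) :
    ∀ N : ℕ, ∃ C : ℝ, 0 < C ∧ ∃ n₀ : ℕ, ∀ n : ℕ, n₀ ≤ n →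
      (∀ z : ℂ, ‖z‖ ≠ 1 / r →
        ‖(∑' k : ℕ, fIter (τ : ℂ) S r n (2 * k) z) -
            ∑ k ∈ Finset.range (N + 1), fIter (τ : ℂ) S r n (2 * k) z‖ ≤
          C * r ^ ((2 * N + 2) * n) / |‖z‖ - 1 / r|) ∧
      (∀ z : ℂ, ‖z‖ ≠ r →
        ‖(∑' k : ℕ, fIter (τ : ℂ) S r n (2 * k + 1) z) -
            ∑ k ∈ Finset.range (N + 1), fIter (τ : ℂ) S r n (2 * k + 1) z‖ ≤
          C * r ^ ((2 * N + 3) * n) / |‖z‖ - r|) :=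
  stmt_9_general ρ hρ0 w hw_ne r hr1 hr2 Di De hDi_an hDe_an hfact τ hτ S hS
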